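/- arXiv:2504.17061 — 2 statements merged into one kernel-verified Lean document; each statement's English description precedes it below -/
import Mathlib

section
/- Let (X, u₀, {u₁,…,u_N}) be a setting with vN-M utilities in which X is additionally a compact subset of a real topological vector space and u₀, u₁, …, u_N are continuous. Let V = {(x,y) ∈ X × X : u₀(y) ≥ u₀(x) and u_i(x) ≥ u_i(y) for all i = 1,…,N}. Then there exists a utilitarian aggregator w ∈ W₊ such that ‖u₀ − w‖∞ ≤ (1/2) · sup{u₀(y) − u₀(x) : (x,y) ∈ V}. -/
/-!
Map `X` to the compact convex set `K = {(u(x), u₀(x))} ⊆ ℝᴺ × ℝ`. The supremum `d` bounds how much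
the last coordinate can increase from a point of `K` to one lying coordinatewise below it in the
first `N` coordinates. Let `A` be the points lying more than `(d + ε)/2` below a point of `K` and
coordinatewise above it up to a margin `δ`, and `B` the points lying at least `(d + ε)/2` above a
point of `K` and coordinatewise below it. Both are convex and `A` is open; by compactness of `K`
a small `δ` makes them disjoint, and a hyperplane separating them is the graph of an affine
function, nondecreasing in each `uᵢ`, within `d/2 + ε` of `u₀` on `K`.

To let `ε → 0`: in `X → ℝ` with the product topology, `W₊` is a finitely generated convex cone,
hence closed (by a conic Carathéodory argument), and the functions within `r` of `u₀` form a
compact box, so the nested nonempty compact sets have a common point.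
-/

lemma exists_nonneg_sub_smul_apply_eq_zero {κ : Type*} [Fintype κ] {μ ν : κ → ℝ} (hμ : 0 ≤ μ)
    (hν : ∃ i, 0 < ν i) : ∃ t : ℝ, 0 ≤ μ - t • ν ∧ ∃ j, (μ - t • ν) j = 0 := by
  classical
  obtain ⟨j, hj, hmin⟩ := Finset.exists_min_image {i | 0 < ν i} (fun i => μ i / ν i)
    (by simpa [Finset.Nonempty] using hν)
  simp only [Finset.mem_filter, Finset.mem_univ, true_and] at hj hmin
  refine ⟨μ j / ν j, fun i => ?_, j, by simp [div_mul_cancel₀ _ hj.ne']⟩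
  simp only [Pi.zero_apply, Pi.sub_apply, Pi.smul_apply, smul_eq_mul, sub_nonneg]
  rcases lt_or_ge 0 (ν i) with hi | hi
  · exact (le_div_iff₀ hi).1 (hmin i hi)
  · exact (mul_nonpos_of_nonneg_of_nonpos (div_nonneg (hμ j) hj.le) hi).trans (hμ i)

section Cone

variable {V : Type*} [AddCommGroup V] [Module ℝ V] [TopologicalSpace V]
  [IsTopologicalAddGroup V] [ContinuousSMul ℝ V] [T2Space V]

theorem isClosed_image_linearCombination_Ici_zero {κ : Type*} [Fintype κ] (v : κ → V) :
    IsClosed (Fintype.linearCombination ℝ v '' Set.Ici 0) := by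
  classical
  induction h : Fintype.card κ using Nat.strong_induction_on generalizing κ with
  | _ n ih =>
    by_cases hv : LinearIndependent ℝ v
    · exact (LinearMap.isClosedEmbedding_of_injective (LinearMap.ker_eq_bot.2
        hv.fintypeLinearCombination_injective)).isClosedMap _ isClosed_Ici
    obtain ⟨ν, hν, hpos⟩ : ∃ ν : κ → ℝ, ∑ i, ν i • v i = 0 ∧ ∃ i, 0 < ν i := by
      obtain ⟨ν, hν, i, hi⟩ := Fintype.not_linearIndependent_iff.1 hv
      rcases hi.lt_or_gt with hi | hi
      · exact ⟨-ν, by simp [hν], i, by simpa using hi⟩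
      · exact ⟨ν, hν, i, hi⟩
    have hcone : Fintype.linearCombination ℝ v '' Set.Ici 0 =
        ⋃ i, Fintype.linearCombination ℝ (fun j : {j // j ≠ i} => v j.1) '' Set.Ici 0 := by
      ext x
      simp only [Set.mem_image, Set.mem_Ici, Set.mem_iUnion, Fintype.linearCombination_apply]
      constructor
      · rintro ⟨μ, hμ, rfl⟩
        obtain ⟨t, hnonneg, j, hj⟩ := exists_nonneg_sub_smul_apply_eq_zero hμ hpos
        refine ⟨j, fun k => (μ - t • ν) k, fun k => hnonneg k, ?_⟩
        have hsum : ∑ k, (μ - t • ν) k • v k = ∑ k, μ k • v k := by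
          simp only [Pi.sub_apply, Pi.smul_apply, smul_eq_mul, sub_smul, mul_smul,
            Finset.sum_sub_distrib, ← Finset.smul_sum, hν, smul_zero, sub_zero]
        rw [← hsum, Fintype.sum_eq_add_sum_subtype_ne _ j, hj, zero_smul, zero_add]
      · rintro ⟨i, ν', hν', rfl⟩
        refine ⟨fun j => if h : j = i then 0 else ν' ⟨j, h⟩, fun j => ?_, ?_⟩
        · by_cases h : j = i
          · simp [h]
          · simpa [h] using hν' ⟨j, h⟩
        · rw [Fintype.sum_eq_add_sum_subtype_ne _ i]
          simp only [dif_pos, zero_smul, zero_add]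
          exact Finset.sum_congr rfl fun k _ => by rw [dif_neg k.2]
    rw [hcone]
    exact isClosed_iUnion_of_finite fun i =>
      ih _ (h ▸ Fintype.card_subtype_lt (p := (· ≠ i)) (not_not.2 rfl)) _ rfl

end Cone

section Aggregators

variable {Y ι : Type*}

/-- The cone `W₊` of the paper, as a set of functions on `Y`. -/
def nonnegAggregators [Fintype ι] (f : ι → Y → ℝ) : Set (Y → ℝ) :=
  {w | ∃ a : ι → ℝ, 0 ≤ a ∧ ∃ b : ℝ, ∀ y, w y = ∑ i, a i * f i y + b}

lemma nonnegAggregators_eq_image [Fintype ι] (f : ι → Y → ℝ) :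
    nonnegAggregators f = Fintype.linearCombination ℝ (Sum.elim f ![1, -1]) '' Set.Ici 0 := by
  ext w
  simp only [nonnegAggregators, Set.mem_ofPred_eq, Set.mem_image, Set.mem_Ici,
    Fintype.linearCombination_apply, Fintype.sum_sum_type, Fin.sum_univ_two]
  constructor
  · rintro ⟨a, ha, b, hw⟩
    refine ⟨Sum.elim a ![max b 0, max (-b) 0], ?_, ?_⟩
    · rintro (i | j)
      · exact ha i
      · fin_cases j <;> simp
    · funext y
      simp [hw, ← sub_eq_add_neg, max_zero_sub_max_neg_zero_eq_self]
  · rintro ⟨μ, hμ, rfl⟩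
    refine ⟨fun i => μ (Sum.inl i), fun i => hμ _, μ (Sum.inr 0) - μ (Sum.inr 1), fun y => ?_⟩
    simp [Finset.sum_apply, sub_eq_add_neg]

lemma isClosed_nonnegAggregators [Fintype ι] (f : ι → Y → ℝ) :
    IsClosed (nonnegAggregators f) := by
  rw [nonnegAggregators_eq_image]
  exact isClosed_image_linearCombination_Ici_zero _

theorem exists_mem_forall_abs_sub_le_of_forall_pos {C : Set (Y → ℝ)} (hC : IsClosed C)
    {f₀ : Y → ℝ} {r : ℝ} (h : ∀ ε > 0, ∃ w ∈ C, ∀ y, |f₀ y - w y| ≤ r + ε) :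
    ∃ w ∈ C, ∀ y, |f₀ y - w y| ≤ r := by
  have hball : ∀ w s, w ∈ Set.univ.pi (fun y => Metric.closedBall (f₀ y) s) ↔
      ∀ y, |f₀ y - w y| ≤ s := by
    simp [Real.dist_eq, abs_sub_comm]
  let t : Set.Ioi (0 : ℝ) → Set (Y → ℝ) := fun ε =>
    C ∩ Set.univ.pi fun y => Metric.closedBall (f₀ y) (r + ε)
  have ht : Monotone t := fun ε₁ ε₂ hε => Set.inter_subset_inter_right _ <|
    Set.pi_mono fun y _ => Metric.closedBall_subset_closedBall (by simpa using hε)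
  obtain ⟨w, hw⟩ := IsCompact.nonempty_iInter_of_directed_nonempty_isCompact_isClosed t
    ht.directed_ge (fun ε => by obtain ⟨w, hwC, hw⟩ := h ε ε.2; exact ⟨w, hwC, (hball _ _).2 hw⟩)
    (fun ε => (isCompact_univ_pi fun y => isCompact_closedBall _ _).inter_left hC)
    (fun ε => hC.inter (isClosed_set_pi fun y _ => Metric.isClosed_closedBall))
  simp only [Set.mem_iInter] at hw
  refine ⟨w, (hw ⟨1, Set.mem_Ioi.2 one_pos⟩).1, fun y => le_of_forall_pos_le_add fun ε hε => ?_⟩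
  exact (hball _ _).1 (hw ⟨ε, hε⟩).2 y

end Aggregators

section Gap

variable {ι : Type*}

open scoped Pointwise in
lemma disjoint_add_prod_add_prod {K : Set ((ι → ℝ) × ℝ)} {δ D : ℝ}
    (hgap : ∀ p ∈ K, ∀ q ∈ K, (∀ i, q.1 i < p.1 i + δ) → q.2 - p.2 ≤ D) :
    Disjoint (K + (Set.univ.pi (fun _ => Set.Ioi (-δ)) ×ˢ Set.Iio (-(D / 2))))
      (K + (Set.Iic 0 ×ˢ Set.Ici (D / 2))) := by
  rw [Set.disjoint_left]
  rintro _ ⟨p, hp, u, ⟨hu₁, hu₂⟩, rfl⟩ ⟨q, hq, v, ⟨hv₁, hv₂⟩, hqv⟩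
  simp only [Set.mem_univ_pi, Set.mem_Ioi, Set.mem_Iio, Set.mem_Iic, Set.mem_Ici]
    at hu₁ hu₂ hv₁ hv₂
  have h₁ : ∀ i, p.1 i < q.1 i + δ := fun i => by
    have := congrArg (fun z => z.1 i) hqv
    simp only [Prod.fst_add, Pi.add_apply] at this
    linarith [hu₁ i, show v.1 i ≤ 0 from hv₁ i]
  have h₂ := congrArg Prod.snd hqv
  simp only [Prod.snd_add] at h₂
  linarith [hgap q hq p hp h₁]

variable [Fintype ι]

lemma nonpos_of_forall_nonneg_add_mul_lt {a b c : ℝ} (h : ∀ t : ℝ, 0 ≤ t → a + t * b < c) :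
    b ≤ 0 := by
  by_contra! hb
  have hac : 0 ≤ c - a := by linarith [h 0 le_rfl]
  have := h ((c - a) / b) (div_nonneg hac hb.le)
  rw [div_mul_cancel₀ _ hb.ne'] at this
  linarith

lemma LinearMap.prod_pi_apply_eq_sum_univ [DecidableEq ι] (f : (ι → ℝ) × ℝ →ₗ[ℝ] ℝ)
    (z : (ι → ℝ) × ℝ) : f z = ∑ i, z.1 i * f (Pi.single i 1, 0) + z.2 * f (0, 1) := by
  calc f z = f.comp (LinearMap.inl ℝ _ ℝ) z.1 + z.2 * f (0, 1) := by
        rw [LinearMap.comp_apply, ← smul_eq_mul, ← map_smul, ← map_add]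
        congr 1
        ext <;> simp
    _ = _ := by
        rw [LinearMap.pi_apply_eq_sum_univ]
        congr 1
        refine Finset.sum_congr rfl fun i _ => ?_
        simp only [smul_eq_mul, LinearMap.comp_apply, LinearMap.inl_apply]
        congr 3
        funext j
        simp [Pi.single_apply, eq_comm]

variable {K : Set ((ι → ℝ) × ℝ)} {d : ℝ}

lemma exists_pos_sub_le_add_of_forall_lt_add (hK : IsCompact K)
    (hd : ∀ p ∈ K, ∀ q ∈ K, q.1 ≤ p.1 → p.2 ≤ q.2 → q.2 - p.2 ≤ d) {ε : ℝ} (hε : 0 < ε) :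
    ∃ δ > 0, ∀ p ∈ K, ∀ q ∈ K, (∀ i, q.1 i < p.1 i + δ) → q.2 - p.2 ≤ d + ε := by
  let excess : ((ι → ℝ) × ℝ) × ((ι → ℝ) × ℝ) → ℝ := fun pq => ∑ i, max (pq.2.1 i - pq.1.1 i) 0
  have hexcess : Continuous excess := by fun_prop
  have hC : IsCompact ((K ×ˢ K) ∩ {pq | d + ε ≤ pq.2.2 - pq.1.2}) :=
    (hK.prod hK).inter_right (isClosed_le continuous_const (by fun_prop))
  obtain ⟨m, hm, hmC⟩ := hC.exists_forall_le' hexcess.continuousOn (a := 0) <| by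
    rintro ⟨p, q⟩ ⟨⟨hp, hq⟩, hgap⟩
    by_contra! hle
    have hzero := (Finset.sum_eq_zero_iff_of_nonneg fun i _ => le_max_right _ 0).1
      (hle.antisymm (Finset.sum_nonneg fun i _ => le_max_right _ 0))
    have hqp : q.1 ≤ p.1 := fun i => by
      simpa [sub_nonpos] using (max_eq_right_iff.1 (hzero i (Finset.mem_univ i)))
    have hgap : d + ε ≤ q.2 - p.2 := hgap
    have hd0 : 0 ≤ d := by simpa using hd p hp p hp le_rfl le_rfl
    linarith [hd p hp q hq hqp (by linarith)]
  refine ⟨m / (Fintype.card ι + 1), by positivity, fun p hp q hq hqp => ?_⟩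
  by_contra! hgt
  have hbound : excess (p, q) ≤ Fintype.card ι * (m / (Fintype.card ι + 1)) := by
    calc excess (p, q) ≤ ∑ _i : ι, m / (Fintype.card ι + 1) :=
          Finset.sum_le_sum fun i _ => max_le (by linarith [hqp i]) (by positivity)
      _ = Fintype.card ι * (m / (Fintype.card ι + 1)) := by simp
  have : Fintype.card ι * (m / (Fintype.card ι + 1)) < m := by
    rw [mul_div_assoc', div_lt_iff₀ (by positivity)]
    linarith
  linarith [hmC (p, q) ⟨⟨hp, hq⟩, hgt.le⟩]

lemma exists_nonneg_affine_approx_of_functional [DecidableEq ι] (f : (ι → ℝ) × ℝ →ₗ[ℝ] ℝ)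
    {c r : ℝ} (hg : ∀ i, f (Pi.single i 1, 0) ≤ 0) (hβ : 0 < f (0, 1))
    (hfK : ∀ p ∈ K, |f p - c| ≤ r * f (0, 1)) :
    ∃ a : ι → ℝ, 0 ≤ a ∧ ∃ b : ℝ, ∀ p ∈ K, |p.2 - (∑ i, a i * p.1 i + b)| ≤ r := by
  set β := f (0, 1)
  refine ⟨fun i => -f (Pi.single i 1, 0) / β, fun i => div_nonneg (neg_nonneg.2 (hg i)) hβ.le,
    c / β, fun p hp => ?_⟩
  have hsum : ∑ i, -f (Pi.single i 1, 0) / β * p.1 i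
      = -(∑ i, p.1 i * f (Pi.single i 1, 0)) / β := by
    rw [neg_div, Finset.sum_div, ← Finset.sum_neg_distrib]
    exact Finset.sum_congr rfl fun i _ => by ring
  have hval : p.2 - (∑ i, -f (Pi.single i 1, 0) / β * p.1 i + c / β) = (f p - c) / β := by
    rw [hsum, LinearMap.prod_pi_apply_eq_sum_univ f p]
    field_simp
    ring
  rw [hval, abs_div, abs_of_pos hβ, div_le_iff₀ hβ]
  exact hfK p hp

open scoped Pointwise in
theorem exists_nonneg_affine_approx_of_gap [DecidableEq ι] (hK : IsCompact K)
    (hKconv : Convex ℝ K) (hKne : K.Nonempty)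
    (hd : ∀ p ∈ K, ∀ q ∈ K, q.1 ≤ p.1 → p.2 ≤ q.2 → q.2 - p.2 ≤ d) {ε : ℝ} (hε : 0 < ε) :
    ∃ a : ι → ℝ, 0 ≤ a ∧ ∃ b : ℝ, ∀ p ∈ K, |p.2 - (∑ i, a i * p.1 i + b)| ≤ d / 2 + ε := by
  obtain ⟨δ, hδ, hgap⟩ := exists_pos_sub_le_add_of_forall_lt_add hK hd hε
  obtain ⟨p₀, hp₀⟩ := hKne
  have hd0 : 0 ≤ d := by simpa using hd p₀ hp₀ p₀ hp₀ le_rfl le_rfl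
  set U : Set ((ι → ℝ) × ℝ) := (Set.univ.pi fun _ => Set.Ioi (-δ)) ×ˢ Set.Iio (-((d + ε) / 2))
  set F : Set ((ι → ℝ) × ℝ) := Set.Iic 0 ×ˢ Set.Ici ((d + ε) / 2)
  obtain ⟨f, c, hfU, hfF⟩ := geometric_hahn_banach_open
    (hKconv.add ((convex_pi fun _ _ => convex_Ioi _).prod (convex_Iio _)))
    ((isOpen_set_pi Set.finite_univ fun _ _ => isOpen_Ioi).prod isOpen_Iio).add_left
    (hKconv.add ((convex_Iic _).prod (convex_Ici _))) (disjoint_add_prod_add_prod hgap)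
  set β := f (0, 1)
  have hf : ∀ z, f z = ∑ i, z.1 i * f (Pi.single i 1, 0) + z.2 * β :=
    LinearMap.prod_pi_apply_eq_sum_univ (f : (ι → ℝ) × ℝ →ₗ[ℝ] ℝ)
  have hU_lt : ∀ p ∈ K, ∀ z ∈ U, f p + f z < c := fun p hp z hz => by
    simpa using hfU _ (Set.add_mem_add hp hz)
  have hF_le : ∀ p ∈ K, c ≤ f p + (d + ε) / 2 * β := fun p hp => by
    simpa [hf (0, _)] using hfF _ (Set.add_mem_add hp (show ((0 : ι → ℝ), (d + ε) / 2) ∈ F from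
      ⟨Set.mem_Iic.2 le_rfl, Set.mem_Ici.2 le_rfl⟩))
  have hlt : ∀ p ∈ K, f p - (d / 2 + ε) * β < c := fun p hp => by
    have := hU_lt p hp (0, -((d + ε) / 2) - ε / 2)
      ⟨fun i _ => by simpa using hδ, Set.mem_Iio.2 (by linarith)⟩
    rw [hf (0, _)] at this
    simp only [Pi.zero_apply, zero_mul, Finset.sum_const_zero, zero_add] at this
    linarith
  -- `U` is unbounded in every direction `(eᵢ, 0)`, so `f` cannot increase along them.
  have hg : ∀ i, f (Pi.single i 1, 0) ≤ 0 := fun i =>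
    nonpos_of_forall_nonneg_add_mul_lt (a := f p₀ + (-((d + ε) / 2) - 1) * β) (c := c)
      fun t ht => by
        have := hU_lt p₀ hp₀ (t • Pi.single i 1, -((d + ε) / 2) - 1)
          ⟨fun j _ => show -δ < (t • Pi.single i 1 : ι → ℝ) j by
            rw [Pi.smul_apply, Pi.single_apply, smul_eq_mul]; split_ifs <;> linarith, by simp⟩
        rw [hf (t • _, _)] at this
        simp only [Pi.smul_apply, Pi.single_apply, smul_eq_mul, mul_ite, mul_one, mul_zero,
          ite_mul, zero_mul, Finset.sum_ite_eq', Finset.mem_univ, if_true] at this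
        linarith
  have hβ : 0 < β := pos_of_mul_pos_right (a := d + 3 * ε / 2)
    (by linarith [(hlt p₀ hp₀).trans_le (hF_le p₀ hp₀)]) (by linarith)
  have hband : ∀ p ∈ K, |f p - c| ≤ (d / 2 + ε) * β := fun p hp =>
    abs_le.2 ⟨by linarith [hF_le p hp, mul_pos hε hβ], by linarith [hlt p hp]⟩
  exact exists_nonneg_affine_approx_of_functional (f : (ι → ℝ) × ℝ →ₗ[ℝ] ℝ) hg hβ hband

end Gap

theorem Convex.image_of_map_combo {E F : Type*} [AddCommGroup E] [Module ℝ E] [AddCommGroup F]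
    [Module ℝ F] {s : Set E} (hs : Convex ℝ s) {φ : E → F}
    (hφ : ∀ x ∈ s, ∀ y ∈ s, ∀ l : ℝ, 0 ≤ l → l ≤ 1 →
      φ (l • x + (1 - l) • y) = l • φ x + (1 - l) • φ y) :
    Convex ℝ (φ '' s) := by
  rintro _ ⟨x, hx, rfl⟩ _ ⟨y, hy, rfl⟩ a b ha hb hab
  obtain rfl : b = 1 - a := by linarith
  exact ⟨_, hs hx hy ha hb hab, hφ x hx y hy a ha (by linarith)⟩

theorem stmt4_general {E : Type*} [AddCommGroup E] [Module ℝ E] [TopologicalSpace E]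
    {N : ℕ} (X : Set E) (hXne : X.Nonempty) (hXconv : Convex ℝ X)
    (hXcomp : IsCompact X)
    (u₀ : E → ℝ) (u : Fin N → E → ℝ)
    (hu₀c : ContinuousOn u₀ X) (huc : ∀ i, ContinuousOn (u i) X)
    (haff₀ : ∀ x ∈ X, ∀ y ∈ X, ∀ l : ℝ, 0 ≤ l → l ≤ 1 →
      u₀ (l • x + (1 - l) • y) = l * u₀ x + (1 - l) * u₀ y)
    (haff : ∀ i : Fin N, ∀ x ∈ X, ∀ y ∈ X, ∀ l : ℝ, 0 ≤ l → l ≤ 1 →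
      u i (l • x + (1 - l) • y) = l * u i x + (1 - l) * u i y) :
    ∃ (a : Fin N → ℝ) (b : ℝ), (∀ i, 0 ≤ a i) ∧
      ∀ x ∈ X, |u₀ x - ((∑ i, a i * u i x) + b)| ≤
        (1 / 2) * sSup ((fun p : E × E => u₀ p.2 - u₀ p.1) ''
          {p ∈ X ×ˢ X | u₀ p.1 ≤ u₀ p.2 ∧ ∀ i, u i p.2 ≤ u i p.1}) := by
  set S := (fun p : E × E => u₀ p.2 - u₀ p.1) ''
    {p ∈ X ×ˢ X | u₀ p.1 ≤ u₀ p.2 ∧ ∀ i, u i p.2 ≤ u i p.1}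
  let Φ : E → (Fin N → ℝ) × ℝ := fun x => (fun i => u i x, u₀ x)
  have hK : IsCompact (Φ '' X) :=
    hXcomp.image_of_continuousOn ((continuousOn_pi.2 huc).prodMk hu₀c)
  have hKconv : Convex ℝ (Φ '' X) := hXconv.image_of_map_combo fun x hx y hy l hl₀ hl₁ => by
    ext <;> simp [Φ, haff, haff₀, hx, hy, hl₀, hl₁]
  have hbdd : BddAbove S := ((hXcomp.prod hXcomp).image_of_continuousOn
    ((hu₀c.comp continuousOn_snd fun p hp => hp.2).sub
      (hu₀c.comp continuousOn_fst fun p hp => hp.1))).bddAbove.mono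
    (Set.image_mono (Set.sep_subset _ _))
  have hgap : ∀ p ∈ Φ '' X, ∀ q ∈ Φ '' X, q.1 ≤ p.1 → p.2 ≤ q.2 → q.2 - p.2 ≤ sSup S := by
    rintro _ ⟨x, hx, rfl⟩ _ ⟨y, hy, rfl⟩ hyx hxy
    exact le_csSup hbdd ⟨(x, y), ⟨⟨hx, hy⟩, hxy, hyx⟩, rfl⟩
  obtain ⟨w, ⟨a, ha, b, hw⟩, hwX⟩ := exists_mem_forall_abs_sub_le_of_forall_pos
    (isClosed_nonnegAggregators fun i (x : X) => u i x) (f₀ := fun x => u₀ x) (r := sSup S / 2)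
    fun ε hε => by
      obtain ⟨a, ha, b, hab⟩ :=
        exists_nonneg_affine_approx_of_gap hK hKconv (hXne.image Φ) hgap hε
      exact ⟨_, ⟨a, ha, b, fun x => rfl⟩, fun x => hab (Φ x) ⟨x, x.2, rfl⟩⟩
  refine ⟨a, b, ha, fun x hx => ?_⟩
  rw [one_div_mul_eq_div]
  simpa [hw] using hwX ⟨x, hx⟩

/-- In a setting with vN-M utilities where `X` is a compact subset of
a real topological vector space and `u₀, u₁, …, u_N` are continuous, with
`V = {(x,y) ∈ X × X : u₀(y) ≥ u₀(x) ∧ ∀ i, uᵢ(x) ≥ uᵢ(y)}`, there exists a utilitarian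
aggregator `w = Σᵢ aᵢ uᵢ + b` with all `aᵢ ≥ 0` such that
`‖u₀ − w‖∞ ≤ (1/2) · sup{u₀(y) − u₀(x) : (x,y) ∈ V}`. -/
theorem stmt4 {E : Type*} [AddCommGroup E] [Module ℝ E] [TopologicalSpace E]
    [IsTopologicalAddGroup E] [ContinuousSMul ℝ E]
    {N : ℕ} (hN : 1 ≤ N) (X : Set E) (hXne : X.Nonempty) (hXconv : Convex ℝ X)
    (hXcomp : IsCompact X)
    (u₀ : E → ℝ) (u : Fin N → E → ℝ)
    (hu₀c : ContinuousOn u₀ X) (huc : ∀ i, ContinuousOn (u i) X)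
    (haff₀ : ∀ x ∈ X, ∀ y ∈ X, ∀ l : ℝ, 0 ≤ l → l ≤ 1 →
      u₀ (l • x + (1 - l) • y) = l * u₀ x + (1 - l) * u₀ y)
    (haff : ∀ i : Fin N, ∀ x ∈ X, ∀ y ∈ X, ∀ l : ℝ, 0 ≤ l → l ≤ 1 →
      u i (l • x + (1 - l) • y) = l * u i x + (1 - l) * u i y) :
    ∃ (a : Fin N → ℝ) (b : ℝ), (∀ i, 0 ≤ a i) ∧
      ∀ x ∈ X, |u₀ x - ((∑ i, a i * u i x) + b)| ≤
        (1 / 2) * sSup ((fun p : E × E => u₀ p.2 - u₀ p.1) ''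
          {p ∈ X ×ˢ X | u₀ p.1 ≤ u₀ p.2 ∧ ∀ i, u i p.2 ≤ u i p.1}) :=
  stmt4_general X hXne hXconv hXcomp u₀ u hu₀c huc haff₀ haff
end

section
/- Let ε ≥ 0 and let (X, u₀, {u₁,…,u_N}) be a setting with vN-M utilities. The following are equivalent: (i) the pair (u₀, {u₁,…,u_N}) satisfies ε-Pareto Indifference; (ii) there exists a utilitarian aggregator w ∈ W with ‖u₀ − w‖∞ ≤ ε/2. -/
/-!
Send `X` to `T = {(u x, u₀ x) | x ∈ X} ⊆ ℝᴺ × ℝ`; it is convex, and Pareto indifference says that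
`u₀` oscillates by at most `ε` on each fibre of `T → ℝᴺ`. The convex set `C = (0, ε) + (T - T)`
then meets the vertical axis only in `[0, ∞)`, and its shadow on `ℝᴺ` is symmetric. The M. Riesz
extension theorem, applied to the cone over `C` enlarged by a complement of the span of that
shadow, gives a linear `φ` with `0 ≤ φ v + t` on `C`: the function `p ↦ p.2 + φ p.1` oscillates by
at most `ε` on all of `T`, and centring it at the midpoint of its range yields the aggregator.
-/

namespace PointedCone

variable {𝕜 M : Type*} [Field 𝕜] [LinearOrder 𝕜] [IsStrictOrderedRing 𝕜] [AddCommGroup M]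
  [Module 𝕜 M] {s : Set M} {x : M}

lemma mem_hull_iff_eq_zero_or_mem_convexConeHull :
    x ∈ hull 𝕜 s ↔ x = 0 ∨ x ∈ ConvexCone.hull 𝕜 s := by
  constructor
  · intro hx
    induction hx using Submodule.span_induction with
    | mem y hy => exact .inr (ConvexCone.subset_hull hy)
    | zero => exact .inl rfl
    | add y z _ _ hy hz =>
      rcases hy with rfl | hy
      · simpa using hz
      rcases hz with rfl | hz
      · simpa using Or.inr hy
      exact .inr ((ConvexCone.hull 𝕜 s).add_mem hy hz)
    | smul c y _ hy =>
      rcases hy with rfl | hy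
      · simp
      rcases c.2.eq_or_lt with hc | hc
      · exact .inl (by rw [show c = 0 from Subtype.ext hc.symm, zero_smul])
      · exact .inr ((ConvexCone.hull 𝕜 s).smul_mem hc hy)
  · rintro (rfl | hx)
    · exact zero_mem _
    · exact ConvexCone.hull_min (C := (hull 𝕜 s : ConvexCone 𝕜 M)) subset_hull hx

end PointedCone

lemma exists_abs_sub_le_half_of_forall_le_add {α : Type*} {s : Set α} {f : α → ℝ} {ε : ℝ}
    (h : ∀ x ∈ s, ∀ y ∈ s, f x ≤ f y + ε) : ∃ b, ∀ x ∈ s, |f x - b| ≤ ε / 2 := by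
  rcases s.eq_empty_or_nonempty with rfl | ⟨x₀, hx₀⟩
  · exact ⟨0, by simp⟩
  have hbdd : BddAbove (f '' s) := ⟨f x₀ + ε, by rintro _ ⟨x, hx, rfl⟩; exact h x hx x₀ hx₀⟩
  refine ⟨sSup (f '' s) - ε / 2, fun x hx => abs_le.2 ⟨?_, ?_⟩⟩
  · have : sSup (f '' s) ≤ f x + ε :=
      csSup_le (Set.Nonempty.image f ⟨x₀, hx₀⟩) (by rintro _ ⟨y, hy, rfl⟩; exact h y hy x hx)
    linarith
  · have := le_csSup hbdd (Set.mem_image_of_mem f hx)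
    linarith

section

variable {F : Type*} [AddCommGroup F] [Module ℝ F] {C : Set (F × ℝ)}

lemma nonneg_of_zero_mk_mem_hull (hC : Convex ℝ C) (hvert : ∀ c, ((0 : F), c) ∈ C → 0 ≤ c)
    {c : ℝ} (hc : ((0 : F), c) ∈ PointedCone.hull ℝ C) : 0 ≤ c := by
  rcases PointedCone.mem_hull_iff_eq_zero_or_mem_convexConeHull.1 hc with h | h
  · exact (congrArg Prod.snd h).ge
  obtain ⟨r, hr, z, hz, hzc⟩ := (ConvexCone.mem_hull_of_convex hC).1 h
  obtain ⟨hz₁, hz₂⟩ := Prod.mk.inj hzc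
  have hz₁ : z.1 = 0 := (smul_eq_zero.1 hz₁).resolve_left hr.ne'
  rw [← hz₂]
  exact mul_nonneg hr.le (hvert z.2 (hz₁ ▸ hz))

lemma exists_neg_fst_mem_hull (hsymm : ∀ z ∈ C, ∃ t, (-z.1, t) ∈ C) {z : F × ℝ}
    (hz : z ∈ PointedCone.hull ℝ C) : ∃ t, (-z.1, t) ∈ PointedCone.hull ℝ C := by
  induction hz using Submodule.span_induction with
  | mem z hz =>
    obtain ⟨t, ht⟩ := hsymm z hz
    exact ⟨t, PointedCone.subset_hull ht⟩
  | zero => exact ⟨0, by rw [Prod.fst_zero, neg_zero, Prod.mk_zero_zero]; exact zero_mem _⟩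
  | add y z _ _ hy hz =>
    obtain ⟨s, hs⟩ := hy
    obtain ⟨t, ht⟩ := hz
    exact ⟨s + t, by simpa [add_comm] using add_mem hs ht⟩
  | smul c z _ hz =>
    obtain ⟨t, ht⟩ := hz
    exact ⟨c • t, by simpa using Submodule.smul_mem _ c ht⟩

theorem exists_linearMap_nonneg_add_snd_of_convex (hC : Convex ℝ C)
    (hsymm : ∀ z ∈ C, ∃ t, (-z.1, t) ∈ C) (hvert : ∀ c, ((0 : F), c) ∈ C → 0 ≤ c) :
    ∃ φ : F →ₗ[ℝ] ℝ, ∀ z ∈ C, 0 ≤ φ z.1 + z.2 := by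
  set K := PointedCone.hull ℝ C
  set S : Submodule ℝ F := (K.map (LinearMap.fst ℝ F ℝ)).lineal
  have fst_mem_S : ∀ z ∈ K, z.1 ∈ S := fun z hz => by
    obtain ⟨t, ht⟩ := exists_neg_fst_mem_hull hsymm hz
    exact PointedCone.mem_lineal.2
      ⟨PointedCone.mem_map.2 ⟨z, hz, rfl⟩, PointedCone.mem_map.2 ⟨_, ht, rfl⟩⟩
  -- Adding a complement `V` of `S` provides the density hypothesis of `riesz_extension`; as `S`
  -- is the whole shadow of `K`, this creates no new points on the vertical axis.
  obtain ⟨V, hV⟩ := S.exists_isCompl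
  set K' := K ⊔ PointedCone.ofSubmodule (V.map (LinearMap.inl ℝ F ℝ))
  have vert : ∀ c, ((0 : F), c) ∈ K' → 0 ≤ c := by
    intro c hc
    obtain ⟨k, hk, _, ⟨v, hv, rfl⟩, hkv⟩ := Submodule.mem_sup.1 hc
    have hk_eq : k = (-v, c) := by
      rw [eq_sub_of_add_eq hkv]; ext <;> simp
    have hvS : v ∈ S := by simpa [hk_eq] using S.neg_mem (fst_mem_S k hk)
    have hv0 : v = 0 := Submodule.disjoint_def.1 hV.disjoint v hvS hv
    exact nonneg_of_zero_mk_mem_hull hC hvert (by simpa [hk_eq, hv0] using hk)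
  have dense : ∀ y : F × ℝ, ∃ t : ℝ, ((0 : F), t) + y ∈ K' := by
    intro y
    obtain ⟨σ, hσ, v, hv, hσv⟩ :=
      Submodule.mem_sup.1 (hV.sup_eq_top ▸ Submodule.mem_top (x := y.1))
    obtain ⟨⟨z, hz, rfl⟩, -⟩ := PointedCone.mem_lineal.1 hσ
    refine ⟨z.2 - y.2, Submodule.mem_sup.2 ⟨z, hz, _, ⟨v, hv, rfl⟩, ?_⟩⟩
    ext
    · simp [← hσv]
    · simp
  let f := (LinearMap.snd ℝ F ℝ).toPMap (LinearMap.range (LinearMap.inr ℝ F ℝ))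
  obtain ⟨g, hgf, hg⟩ := riesz_extension K' f
    (fun ⟨_, c, hc⟩ hcK => by subst hc; exact vert c hcK)
    (fun y => by
      obtain ⟨t, ht⟩ := dense y
      exact ⟨⟨_, t, rfl⟩, ht⟩)
  refine ⟨g.comp (LinearMap.inl ℝ F ℝ), fun z hz => ?_⟩
  have hg1 : g (0, 1) = 1 := hgf ⟨_, 1, rfl⟩
  have hgz : g z = g (z.1, 0) + z.2 := by
    conv_lhs => rw [show z = (z.1, 0) + z.2 • ((0 : F), (1 : ℝ)) by ext <;> simp]
    rw [map_add, map_smul, hg1, smul_eq_mul, mul_one]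
  have := hg z (Submodule.mem_sup_left (PointedCone.subset_hull hz))
  simpa [hgz] using this

open scoped Pointwise in
theorem exists_linearMap_abs_sub_le_of_fiber {T : Set (F × ℝ)} (hT : Convex ℝ T) {ε : ℝ}
    (hfib : ∀ p ∈ T, ∀ q ∈ T, p.1 = q.1 → q.2 - ε ≤ p.2) :
    ∃ (φ : F →ₗ[ℝ] ℝ) (b : ℝ), ∀ p ∈ T, |p.2 - (φ p.1 + b)| ≤ ε / 2 := by
  have hsymm : ∀ z ∈ ((0 : F), ε) +ᵥ (T - T), ∃ t, (-z.1, t) ∈ ((0 : F), ε) +ᵥ (T - T) := by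
    rintro _ ⟨_, ⟨p, hp, q, hq, rfl⟩, rfl⟩
    exact ⟨ε + (q.2 - p.2), ⟨_, ⟨q, hq, p, hp, rfl⟩, by ext <;> simp⟩⟩
  have hvert : ∀ c, ((0 : F), c) ∈ ((0 : F), ε) +ᵥ (T - T) → 0 ≤ c := by
    rintro c ⟨_, ⟨p, hp, q, hq, rfl⟩, hc⟩
    obtain ⟨h₁, h₂⟩ := Prod.mk.inj hc
    have := hfib p hp q hq (by simpa [sub_eq_zero] using h₁)
    simp only [Prod.snd_sub] at h₂
    linarith
  obtain ⟨φ, hφ⟩ := exists_linearMap_nonneg_add_snd_of_convex ((hT.sub hT).vadd _) hsymm hvert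
  have hosc : ∀ p ∈ T, ∀ q ∈ T, p.2 + φ p.1 ≤ q.2 + φ q.1 + ε := by
    intro p hp q hq
    have := hφ _ ⟨_, ⟨q, hq, p, hp, rfl⟩, rfl⟩
    simp only [vadd_eq_add, Prod.fst_add, Prod.snd_add, Prod.fst_sub, Prod.snd_sub, zero_add,
      map_sub] at this
    linarith
  obtain ⟨b, hb⟩ := exists_abs_sub_le_half_of_forall_le_add hosc
  exact ⟨-φ, b, fun p hp => by simpa [sub_add_eq_sub_sub] using hb p hp⟩

end

theorem Convex.image_of_map_convexCombination {E F : Type*} [AddCommGroup E] [Module ℝ E]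
    [AddCommGroup F] [Module ℝ F] {s : Set E} (hs : Convex ℝ s) {f : E → F}
    (hf : ∀ x ∈ s, ∀ y ∈ s, ∀ l : ℝ, 0 ≤ l → l ≤ 1 →
      f (l • x + (1 - l) • y) = l • f x + (1 - l) • f y) :
    Convex ℝ (f '' s) := by
  rintro _ ⟨x, hx, rfl⟩ _ ⟨y, hy, rfl⟩ a b ha hb hab
  obtain rfl : b = 1 - a := by linarith
  exact ⟨_, hs hx hy ha hb hab, hf x hx y hy a ha (by linarith)⟩

theorem stmt8_general {E : Type*} [AddCommGroup E] [Module ℝ E]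
    {N : ℕ} {ε : ℝ}
    (X : Set E) (hXconv : Convex ℝ X)
    (u₀ : E → ℝ) (u : Fin N → E → ℝ)
    (haff₀ : ∀ x ∈ X, ∀ y ∈ X, ∀ l : ℝ, 0 ≤ l → l ≤ 1 →
      u₀ (l • x + (1 - l) • y) = l * u₀ x + (1 - l) * u₀ y)
    (haff : ∀ i : Fin N, ∀ x ∈ X, ∀ y ∈ X, ∀ l : ℝ, 0 ≤ l → l ≤ 1 →
      u i (l • x + (1 - l) • y) = l * u i x + (1 - l) * u i y) :
    (∀ x ∈ X, ∀ y ∈ X, (∀ i, u i x = u i y) → u₀ y - ε ≤ u₀ x) ↔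
      (∃ (a : Fin N → ℝ) (b : ℝ),
        ∀ x ∈ X, |u₀ x - ((∑ i, a i * u i x) + b)| ≤ ε / 2) := by
  constructor
  · intro hPI
    have hT : Convex ℝ ((fun x => ((fun i => u i x), u₀ x)) '' X) :=
      hXconv.image_of_map_convexCombination fun x hx y hy l hl₀ hl₁ =>
        Prod.ext (funext fun i => haff i x hx y hy l hl₀ hl₁) (haff₀ x hx y hy l hl₀ hl₁)
    obtain ⟨φ, b, hφ⟩ := exists_linearMap_abs_sub_le_of_fiber hT <| by
      rintro _ ⟨x, hx, rfl⟩ _ ⟨y, hy, rfl⟩ hxy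
      exact hPI x hx y hy (congrFun hxy)
    refine ⟨LinearEquiv.piRing ℝ ℝ (Fin N) ℝ φ, b, fun x hx => ?_⟩
    have hsum : φ (fun i => u i x) = ∑ i, LinearEquiv.piRing ℝ ℝ (Fin N) ℝ φ i * u i x := by
      conv_lhs => rw [← (LinearEquiv.piRing ℝ ℝ (Fin N) ℝ).symm_apply_apply φ]
      rw [LinearEquiv.piRing_symm_apply]
      exact Finset.sum_congr rfl fun i _ => mul_comm _ _
    rw [← hsum]
    exact hφ _ ⟨x, hx, rfl⟩
  · rintro ⟨a, b, hab⟩ x hx y hy hxy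
    have hx' := abs_le.1 (hab x hx)
    have hy' := abs_le.1 (hab y hy)
    simp only [hxy] at hx'
    linarith [hx'.1, hy'.2]

/-- Theorem: aggregation with `ε`-Pareto Indifference.
Let `ε ≥ 0` and let `(X, u₀, {u₁,…,u_N})` be a setting with vN-M utilities.  Then
`ε`-Pareto Indifference holds iff there is a utilitarian aggregator
`w = Σᵢ aᵢ uᵢ + b` (weights of arbitrary sign) with `‖u₀ − w‖∞ ≤ ε/2`. -/
theorem stmt8 {E : Type*} [AddCommGroup E] [Module ℝ E]
    {N : ℕ} (hN : 1 ≤ N) {ε : ℝ} (hε : 0 ≤ ε)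
    (X : Set E) (hXne : X.Nonempty) (hXconv : Convex ℝ X)
    (u₀ : E → ℝ) (u : Fin N → E → ℝ)
    (haff₀ : ∀ x ∈ X, ∀ y ∈ X, ∀ l : ℝ, 0 ≤ l → l ≤ 1 →
      u₀ (l • x + (1 - l) • y) = l * u₀ x + (1 - l) * u₀ y)
    (haff : ∀ i : Fin N, ∀ x ∈ X, ∀ y ∈ X, ∀ l : ℝ, 0 ≤ l → l ≤ 1 →
      u i (l • x + (1 - l) • y) = l * u i x + (1 - l) * u i y) :
    (∀ x ∈ X, ∀ y ∈ X, (∀ i, u i x = u i y) → u₀ y - ε ≤ u₀ x) ↔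
      (∃ (a : Fin N → ℝ) (b : ℝ),
        ∀ x ∈ X, |u₀ x - ((∑ i, a i * u i x) + b)| ≤ ε / 2) :=
  stmt8_general X hXconv u₀ u haff₀ haff
end
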